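/- For every positive integer n, the following three conditions are equivalent: (a) every finite group of order at most n admits a uniform cyclic group factorization; (b) every finite group of order at most n that is not a cyclic group of prime power order admits a proper uniform group factorization; (c) every finite simple group of order at most n that is not a cyclic group of prime power order admits a proper uniform group factorization. -/

import Mathlib

/-- The number of ways to write `g` as an ordered product `h₁ * h₂ * ⋯ * h_k`
with `hᵢ` an element of the `i`-th member of the list `L` of subsets of `G`. -/
noncomputable def multCount {G : Type*} [Group G] (L : List (Set G)) (g : G) : ℕ :=
  Nat.card {h : List G // List.Forall₂ (· ∈ ·) h L ∧ h.prod = g}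

/-- `G` admits a uniform cyclic group factorization. -/
def AdmitsUCF (G : Type*) [Group G] : Prop :=
  ∃ (k : ℕ) (H : Fin k → Subgroup G) (t : ℕ),
    1 ≤ k ∧ 0 < t ∧ (∀ i, IsCyclic (H i)) ∧
    ∀ g : G, multCount (List.ofFn fun i => (H i : Set G)) g = t

/-- `G` admits a proper uniform group factorization (all factors are proper subgroups). -/
def AdmitsProperUGF (G : Type*) [Group G] : Prop :=
  ∃ (k : ℕ) (H : Fin k → Subgroup G) (t : ℕ),
    1 ≤ k ∧ 0 < t ∧ (∀ i, H i ≠ ⊤) ∧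
    ∀ g : G, multCount (List.ofFn fun i => (H i : Set G)) g = t

/-- `G` is a cyclic group whose order is a prime power `p ^ r` (`r ≥ 0`). -/
def IsCyclicOfPrimePowerOrder (G : Type*) [Group G] : Prop :=
  IsCyclic G ∧ ∃ p r : ℕ, p.Prime ∧ Nat.card G = p ^ r

/-!
(a) ⇒ (b): in a non-cyclic group the cyclic factors of a uniform cyclic factorization are
proper, and a cyclic group whose order `a * b` splits into coprime factors `a, b > 1` is the
internal direct product of its subgroups of orders `a` and `b`.

(c) ⇒ (a), by strong induction on `|G|`. Substituting for a factor `K` a list of subgroups of `K`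
that factors `K` uniformly with multiplicity `s` multiplies every count by `s`, so a uniform
factorization of `G` whose factors admit uniform cyclic factorizations refines to one of `G`.
If `G` is simple and not cyclic, (c) supplies such a factorization with proper, hence smaller,
factors. Otherwise take a proper nontrivial normal subgroup `N`, lift the cyclic factors
`⟨q₁⟩, …, ⟨q_k⟩` of a uniform cyclic factorization of `G ⧸ N` to `⟨g₁⟩, …, ⟨g_k⟩` in `G`: then
`⟨g₁⟩ ⋯ ⟨g_k⟩ N` is uniform, since each projection `⟨gᵢ⟩ → ⟨qᵢ⟩` has all its fibres of size
`|⟨gᵢ⟩ ∩ N|`.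
-/

open Finset

section Basic

variable {G : Type*} [Group G]

instance finite_multCount_subtype [Finite G] (L : List (Set G)) (g : G) :
    Finite {h : List G // List.Forall₂ (· ∈ ·) h L ∧ h.prod = g} :=
  Finite.of_injective (β := List.Vector G L.length) (fun h => ⟨h.1, h.2.1.length_eq⟩)
    fun _ _ h => Subtype.ext (congrArg Subtype.val h :)

open scoped Classical in
theorem multCount_nil (g : G) : multCount [] g = if g = 1 then 1 else 0 := by
  rw [multCount]
  split_ifs with hg
  · subst hg
    exact Nat.card_eq_one_iff_exists.mpr ⟨⟨[], .nil, rfl⟩, by rintro ⟨_, ⟨⟩, -⟩; rfl⟩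
  · exact Nat.card_eq_zero.mpr (.inl ⟨by rintro ⟨_, ⟨⟩, hp⟩; exact hg hp.symm⟩)

theorem multCount_append [Fintype G] (M L : List (Set G)) (g : G) :
    multCount (M ++ L) g = ∑ x, multCount M x * multCount L (x⁻¹ * g) := by
  let e : (Σ x : G, {h : List G // List.Forall₂ (· ∈ ·) h M ∧ h.prod = x} ×
      {h : List G // List.Forall₂ (· ∈ ·) h L ∧ h.prod = x⁻¹ * g}) →
      {h : List G // List.Forall₂ (· ∈ ·) h (M ++ L) ∧ h.prod = g} :=
    fun ⟨x, h₁, h₂⟩ => ⟨h₁.1 ++ h₂.1, List.rel_append h₁.2.1 h₂.2.1, by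
      rw [List.prod_append, h₁.2.2, h₂.2.2, mul_inv_cancel_left]⟩
  have he : Function.Bijective e := by
    constructor
    · rintro ⟨x, ⟨h₁, hM₁, rfl⟩, ⟨h₂, _⟩⟩ ⟨x', ⟨h₁', hM₁', rfl⟩, ⟨h₂', _⟩⟩ heq
      obtain ⟨rfl, rfl⟩ := List.append_inj (congrArg Subtype.val heq)
        (hM₁.length_eq.trans hM₁'.length_eq.symm)
      rfl
    · rintro ⟨h, hML, rfl⟩
      refine ⟨⟨(h.take M.length).prod, ⟨_, List.forall₂_take_append _ _ _ hML, rfl⟩,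
        ⟨_, List.forall₂_drop_append _ _ _ hML, ?_⟩⟩, ?_⟩
      · rw [← List.prod_take_mul_prod_drop h M.length, inv_mul_cancel_left]
      · exact Subtype.ext (List.take_append_drop _ _)
  rw [multCount, ← Nat.card_congr (Equiv.ofBijective e he), Nat.card_sigma]
  simp only [Nat.card_prod, multCount]

open scoped Classical in
theorem multCount_singleton (S : Set G) (g : G) :
    multCount [S] g = if g ∈ S then 1 else 0 := by
  rw [multCount]
  split_ifs with hg
  · refine Nat.card_eq_one_iff_exists.mpr ⟨⟨[g], .cons hg .nil, List.prod_singleton⟩, ?_⟩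
    rintro ⟨_, hS, rfl⟩
    obtain ⟨a, _, -, hnil, rfl⟩ := List.forall₂_cons_right_iff.1 hS
    obtain rfl := List.forall₂_nil_right_iff.1 hnil
    simp
  · refine Nat.card_eq_zero.mpr (.inl ⟨?_⟩)
    rintro ⟨_, hS, rfl⟩
    obtain ⟨a, _, ha, hnil, rfl⟩ := List.forall₂_cons_right_iff.1 hS
    obtain rfl := List.forall₂_nil_right_iff.1 hnil
    simp_all

open scoped Classical in
theorem multCount_cons [Fintype G] (A : Set G) (L : List (Set G)) (g : G) :
    multCount (A :: L) g = ∑ a with a ∈ A, multCount L (a⁻¹ * g) := by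
  rw [← List.singleton_append, multCount_append, sum_filter]
  simp [multCount_singleton]

open scoped Classical in
theorem multCount_map_image_val (K : Subgroup G) (L : List (Set K)) (g : G) :
    multCount (L.map (Subtype.val '' ·)) g = if hg : g ∈ K then multCount L ⟨g, hg⟩ else 0 := by
  have forall₂_map_val (l : List K) : List.Forall₂ (· ∈ ·) (l.map Subtype.val)
      (L.map (Subtype.val '' ·)) ↔ List.Forall₂ (· ∈ ·) l L := by
    simp only [List.forall₂_map_left_iff, List.forall₂_map_right_iff,
      Subtype.val_injective.mem_set_image]
  let e : {l : List K // List.Forall₂ (· ∈ ·) l L ∧ (l.prod : G) = g} ≃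
      {h : List G // List.Forall₂ (· ∈ ·) h (L.map (Subtype.val '' ·)) ∧ h.prod = g} := by
    refine Equiv.ofBijective (fun l => ⟨l.1.map Subtype.val, (forall₂_map_val _).2 l.2.1,
      by rw [← Subgroup.val_list_prod, l.2.2]⟩) ⟨fun l l' hl => ?_, fun ⟨h, hL, hg⟩ => ?_⟩
    · exact Subtype.ext (List.map_injective_iff.2 Subtype.val_injective (congrArg Subtype.val hl))
    · have hK : ∀ x ∈ h, x ∈ K := by
        refine ((List.forall₂_and_left (R := fun _ _ => True) _ _).1
          ((List.forall₂_map_right_iff.1 hL).imp ?_)).1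
        rintro _ _ ⟨x, -, rfl⟩
        exact ⟨x.2, trivial⟩
      lift h to List K using hK
      exact ⟨⟨h, (forall₂_map_val h).1 hL, by rw [Subgroup.val_list_prod, hg]⟩, rfl⟩
  rw [multCount, ← Nat.card_congr e]
  split_ifs with hg
  · exact Nat.card_congr (Equiv.subtypeEquivRight fun l => by simp [Subtype.ext_iff])
  · exact Nat.card_eq_zero.mpr (.inl ⟨fun l => hg (l.2.2 ▸ l.1.prod.2)⟩)

end Basic

section Refinement

variable {G : Type*} [Group G]

def IsUniformFactorization (L : List (Subgroup G)) (t : ℕ) : Prop :=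
  L ≠ [] ∧ 0 < t ∧ ∀ g : G, multCount (L.map (↑)) g = t

theorem exists_ofFn_iff_exists_isUniformFactorization (P : Subgroup G → Prop) :
    (∃ (k : ℕ) (H : Fin k → Subgroup G) (t : ℕ), 1 ≤ k ∧ 0 < t ∧ (∀ i, P (H i)) ∧
      ∀ g : G, multCount (List.ofFn fun i => (H i : Set G)) g = t) ↔
    ∃ (L : List (Subgroup G)) (t : ℕ), IsUniformFactorization L t ∧ ∀ K ∈ L, P K := by
  constructor
  · rintro ⟨k, H, t, hk, ht, hP, hu⟩
    refine ⟨List.ofFn H, t, ⟨?_, ht, ?_⟩, by simpa [List.mem_ofFn] using hP⟩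
    · rw [Ne, ← List.length_eq_zero_iff, List.length_ofFn]
      omega
    · simpa [List.map_ofFn, Function.comp_def] using hu
  · rintro ⟨L, t, ⟨hL, ht, hu⟩, hP⟩
    refine ⟨L.length, L.get, t, List.length_pos_iff.2 hL, ht, fun i => hP _ (L.get_mem i), ?_⟩
    simpa [← List.map_ofFn] using hu

theorem admitsUCF_iff :
    AdmitsUCF G ↔
      ∃ (L : List (Subgroup G)) (t : ℕ), IsUniformFactorization L t ∧ ∀ K ∈ L, IsCyclic K :=
  exists_ofFn_iff_exists_isUniformFactorization fun K => IsCyclic K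

theorem admitsProperUGF_iff :
    AdmitsProperUGF G ↔
      ∃ (L : List (Subgroup G)) (t : ℕ), IsUniformFactorization L t ∧ ∀ K ∈ L, K ≠ ⊤ :=
  exists_ofFn_iff_exists_isUniformFactorization (· ≠ ⊤)

theorem admitsUCF_of_isCyclic (h : IsCyclic G) : AdmitsUCF G := by
  obtain ⟨g, hg⟩ := isCyclic_iff_exists_zpowers_eq_top.1 h
  refine admitsUCF_iff.2 ⟨[Subgroup.zpowers g], 1, ⟨List.cons_ne_nil _ _, one_pos, fun x => ?_⟩,
    by simp [Subgroup.isCyclic_zpowers]⟩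
  simp [multCount_singleton, hg]

theorem Subgroup.isCyclic_map {H : Type*} [Group H] (f : G →* H) (K : Subgroup G) [IsCyclic K] :
    IsCyclic (K.map f) := by
  obtain ⟨g, rfl⟩ := (Subgroup.isCyclic_iff_exists_zpowers_eq_top K).1 ‹_›
  rw [MonoidHom.map_zpowers]
  infer_instance

theorem multCount_append_eq_mul [Fintype G] {M₁ M₂ L₁ L₂ : List (Set G)} {s₁ s₂ : ℕ}
    (h₁ : ∀ g, multCount M₁ g = s₁ * multCount L₁ g)
    (h₂ : ∀ g, multCount M₂ g = s₂ * multCount L₂ g) (g : G) :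
    multCount (M₁ ++ M₂) g = s₁ * s₂ * multCount (L₁ ++ L₂) g := by
  rw [multCount_append, multCount_append, mul_sum]
  exact sum_congr rfl fun x _ => by rw [h₁, h₂]; ring

theorem exists_isCyclic_refinement_of_admitsUCF [Finite G] (K : Subgroup G) (hK : AdmitsUCF K) :
    ∃ M : List (Subgroup G), M ≠ [] ∧ (∀ C ∈ M, IsCyclic C) ∧
      ∃ s, 0 < s ∧ ∀ g : G, multCount (M.map (↑)) g = s * multCount [(K : Set G)] g := by
  classical
  obtain ⟨L, t, ⟨hL, ht, hu⟩, hcyc⟩ := admitsUCF_iff.1 hK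
  refine ⟨L.map (·.map K.subtype), by simpa using hL, ?_, t, ht, fun g => ?_⟩
  · simp only [List.mem_map]
    rintro _ ⟨C, hC, rfl⟩
    have := hcyc C hC
    exact Subgroup.isCyclic_map _ C
  · have hmap : (L.map (·.map K.subtype)).map ((↑) : Subgroup G → Set G) =
        (L.map ((↑) : Subgroup K → Set K)).map (Subtype.val '' ·) := by
      simp [Function.comp_def, Subgroup.coe_map]
    rw [hmap, multCount_map_image_val, multCount_singleton]
    simp only [SetLike.mem_coe]
    split_ifs <;> simp [hu]

theorem exists_isCyclic_refinement [Finite G] (L : List (Subgroup G))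
    (hL : ∀ K ∈ L, AdmitsUCF K) :
    ∃ M : List (Subgroup G), (L ≠ [] → M ≠ []) ∧ (∀ C ∈ M, IsCyclic C) ∧
      ∃ s, 0 < s ∧ ∀ g : G, multCount (M.map (↑)) g = s * multCount (L.map (↑)) g := by
  have := Fintype.ofFinite G
  induction L with
  | nil => exact ⟨[], fun h => (h rfl).elim, by simp, 1, one_pos, by simp⟩
  | cons K L ih =>
    obtain ⟨MK, hMK, hcycK, sK, hsK, hK⟩ :=
      exists_isCyclic_refinement_of_admitsUCF K (hL K List.mem_cons_self)
    obtain ⟨M, -, hcyc, s, hs, hM⟩ := ih fun K' hK' => hL K' (List.mem_cons_of_mem _ hK')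
    refine ⟨MK ++ M, fun _ => by simp [hMK], ?_, sK * s, Nat.mul_pos hsK hs, fun g => ?_⟩
    · simp only [List.mem_append]
      rintro C (hC | hC)
      exacts [hcycK C hC, hcyc C hC]
    · simpa using multCount_append_eq_mul hK hM g

theorem admitsUCF_of_isUniformFactorization [Finite G] {L : List (Subgroup G)} {t : ℕ}
    (hLt : IsUniformFactorization L t) (hL : ∀ K ∈ L, AdmitsUCF K) : AdmitsUCF G := by
  obtain ⟨hne, ht, hu⟩ := hLt
  obtain ⟨M, hM, hcyc, s, hs, hMs⟩ := exists_isCyclic_refinement L hL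
  exact admitsUCF_iff.2 ⟨M, s * t, ⟨hM hne, Nat.mul_pos hs ht, fun g => by rw [hMs, hu]⟩, hcyc⟩

end Refinement

section Quotient

variable {G Q : Type*} [Group G] [Group Q]

open scoped Classical in
theorem sum_filter_mem_comp_eq_card_smul [Fintype G] [Fintype Q] {M : Type*} [AddCommMonoid M]
    (π : G →* Q) (A : Subgroup G) (f : Q → M) :
    ∑ a with a ∈ A, f (π a) = Nat.card (A ⊓ π.ker : Subgroup G) • ∑ b with b ∈ A.map π, f b := by
  have himage : ({a | a ∈ A} : Finset G).image π = ({b | b ∈ A.map π} : Finset Q) := by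
    ext b
    simp [Subgroup.mem_map]
  rw [sum_comp, himage, smul_sum]
  refine sum_congr rfl fun b hb => ?_
  obtain ⟨a₀, ha₀, rfl⟩ : ∃ a₀ ∈ A, π a₀ = b := by simpa using hb
  congr 1
  rw [Nat.card_eq_fintype_card, Fintype.card_subtype]
  refine card_nbij' (a₀⁻¹ * ·) (a₀ * ·) ?_ ?_ (fun _ _ => mul_inv_cancel_left _ _)
    (fun _ _ => inv_mul_cancel_left _ _) <;>
  · intro a
    simp_all [Subgroup.mem_inf, mul_mem_cancel_left]

open scoped Classical in
theorem sum_filter_map_eq_multCount [Fintype G] [Fintype Q] (π : G →* Q)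
    (As : List (Subgroup G)) (q : Q) :
    ∑ x with π x = q, multCount (As.map (↑)) x =
      (As.map fun A => Nat.card (A ⊓ π.ker : Subgroup G)).prod *
        multCount (As.map fun A => ((A.map π : Subgroup Q) : Set Q)) q := by
  induction As generalizing q with
  | nil => simp [multCount_nil, eq_comm]
  | cons A As ih =>
    set D := (As.map fun A => Nat.card (A ⊓ π.ker : Subgroup G)).prod
    have hshift (a : G) : ∑ x with π x = q, multCount (As.map (↑)) (a⁻¹ * x) =
        ∑ y with π y = (π a)⁻¹ * q, multCount (As.map (↑)) y :=
      sum_nbij' (a⁻¹ * ·) (a * ·) (by simp) (by simp [eq_inv_mul_iff_mul_eq]) (by simp) (by simp)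
        (by simp)
    simp only [List.map_cons, List.prod_cons, multCount_cons, SetLike.mem_coe]
    rw [sum_comm]
    simp only [hshift, ih]
    rw [sum_filter_mem_comp_eq_card_smul π A
      fun b => D * multCount (As.map fun A => ((A.map π : Subgroup Q) : Set Q)) (b⁻¹ * q),
      smul_eq_mul, ← mul_sum, mul_assoc]

theorem multCount_append_normal [Finite G] (N : Subgroup G) [N.Normal] (As : List (Subgroup G))
    (g : G) :
    multCount (As.map (↑) ++ [(N : Set G)]) g =
      (As.map fun A => Nat.card (A ⊓ N : Subgroup G)).prod *
        multCount (As.map fun A => ((A.map (QuotientGroup.mk' N) : Subgroup (G ⧸ N)) : Set (G ⧸ N)))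
          (g : G ⧸ N) := by
  classical
  have := Fintype.ofFinite G
  have := Fintype.ofFinite (G ⧸ N)
  have key := sum_filter_map_eq_multCount (QuotientGroup.mk' N) As g
  rw [QuotientGroup.ker_mk'] at key
  rw [← key, multCount_append, sum_filter]
  refine sum_congr rfl fun x _ => ?_
  simp [multCount_singleton, QuotientGroup.eq]

theorem admitsUCF_of_normal [Finite G] (N : Subgroup G) [N.Normal] (hN : AdmitsUCF N)
    (hQ : AdmitsUCF (G ⧸ N)) : AdmitsUCF G := by
  obtain ⟨Ks, t, ⟨hKs, ht, hu⟩, hcyc⟩ := admitsUCF_iff.1 hQ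
  have hlift : ∀ K ∈ Ks, ∃ g : G, (Subgroup.zpowers g).map (QuotientGroup.mk' N) = K := by
    intro K hK
    obtain ⟨q, rfl⟩ := (K.isCyclic_iff_exists_zpowers_eq_top).1 (hcyc K hK)
    obtain ⟨g, rfl⟩ := QuotientGroup.mk'_surjective N q
    exact ⟨g, MonoidHom.map_zpowers _ _⟩
  choose! lift hlift using hlift
  set As := Ks.map fun K => Subgroup.zpowers (lift K)
  have hAs : (As.map fun A => ((A.map (QuotientGroup.mk' N) : Subgroup (G ⧸ N)) : Set (G ⧸ N))) =
      Ks.map (↑) := by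
    simp only [As, List.map_map]
    exact List.map_congr_left fun K hK => congrArg SetLike.coe (hlift K hK)
  refine admitsUCF_of_isUniformFactorization (L := As ++ [N])
    (t := (As.map fun A => Nat.card (A ⊓ N : Subgroup G)).prod * t)
    ⟨by simp, Nat.mul_pos (List.prod_pos fun _ h => ?_) ht,
      fun g => ?_⟩ ?_
  · obtain ⟨A, -, rfl⟩ := List.mem_map.1 h
    exact Nat.card_pos
  · rw [List.map_append, List.map_singleton, multCount_append_normal, hAs, hu]
  · simp only [List.mem_append, List.mem_singleton]
    rintro K (hK | rfl)
    · obtain ⟨K', -, rfl⟩ := List.mem_map.1 hK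
      exact admitsUCF_of_isCyclic inferInstance
    · exact hN

end Quotient

section Cyclic

variable {G : Type*} [Group G]

theorem IsCyclic.exists_subgroup_natCard_eq [Finite G] [IsCyclic G] {d : ℕ}
    (hd : d ∣ Nat.card G) : ∃ H : Subgroup G, Nat.card H = d := by
  obtain ⟨g, hg⟩ := IsCyclic.exists_ofOrder_eq_natCard (α := G)
  refine ⟨Subgroup.zpowers (g ^ (Nat.card G / d)), ?_⟩
  rw [Nat.card_zpowers, ← hg, orderOf_pow_orderOf_div (hg ▸ Nat.card_pos.ne') (hg ▸ hd)]

theorem Subgroup.card_lt_of_ne_top [Finite G] {H : Subgroup G} (hH : H ≠ ⊤) :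
    Nat.card H < Nat.card G :=
  H.card_le_card_group.lt_of_ne (mt (Subgroup.card_eq_iff_eq_top H).1 hH)

theorem QuotientGroup.card_lt_of_ne_bot [Finite G] {N : Subgroup G} [N.Normal] (hN : N ≠ ⊥) :
    Nat.card (G ⧸ N) < Nat.card G := by
  rw [N.card_eq_card_quotient_mul_card_subgroup]
  exact lt_mul_of_one_lt_right Nat.card_pos (N.one_lt_card_iff_ne_bot.2 hN)

theorem multCount_pair_of_isComplement {S T : Set G} (h : Subgroup.IsComplement S T) (g : G) :
    multCount [S, T] g = 1 := by
  obtain ⟨⟨s, t⟩, hst, huniq⟩ := h.existsUnique g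
  refine Nat.card_eq_one_iff_exists.2 ⟨⟨[s, t], .cons s.2 (.cons t.2 .nil), by simpa using hst⟩, ?_⟩
  rintro ⟨_, hST, rfl⟩
  obtain ⟨a, _, ha, hT, rfl⟩ := List.forall₂_cons_right_iff.1 hST
  obtain ⟨b, _, hb, hnil, rfl⟩ := List.forall₂_cons_right_iff.1 hT
  obtain rfl := List.forall₂_nil_right_iff.1 hnil
  obtain ⟨rfl, rfl⟩ := Prod.ext_iff.1 (huniq (⟨a, ha⟩, ⟨b, hb⟩) (by simp))
  rfl

theorem admitsProperUGF_of_isComplement' {H K : Subgroup G} (h : H.IsComplement' K)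
    (hH : H ≠ ⊤) (hK : K ≠ ⊤) : AdmitsProperUGF G :=
  admitsProperUGF_iff.2 ⟨[H, K], 1, ⟨by simp, one_pos, multCount_pair_of_isComplement h⟩,
    by simp [hH, hK]⟩

theorem admitsProperUGF_of_isCyclic [Finite G] [IsCyclic G]
    (hG : ¬∃ p r : ℕ, p.Prime ∧ Nat.card G = p ^ r) : AdmitsProperUGF G := by
  set m := Nat.card G
  set p := m.minFac
  have hp : p.Prime := Nat.minFac_prime fun h => hG ⟨2, 0, Nat.prime_two, h⟩
  have hm : p ^ m.factorization p * (m / p ^ m.factorization p) = m :=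
    Nat.ordProj_mul_ordCompl_eq_self m p
  have hcop : p.Coprime (m / p ^ m.factorization p) := Nat.coprime_ordCompl hp Nat.card_pos.ne'
  obtain ⟨H, hH⟩ := IsCyclic.exists_subgroup_natCard_eq (G := G) (Dvd.intro _ hm)
  obtain ⟨K, hK⟩ := IsCyclic.exists_subgroup_natCard_eq (G := G) (Dvd.intro_left _ hm)
  refine admitsProperUGF_of_isComplement' (Subgroup.isComplement'_of_coprime (H := H) (K := K)
    (by rw [hH, hK, hm]) (by rw [hH, hK]; exact hcop.pow_left _))
    (fun hHtop => hG ⟨p, m.factorization p, hp, ?_⟩) (fun hKtop => ?_)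
  · rw [← hH, hHtop, Subgroup.card_top]
  · rw [hKtop, Subgroup.card_top] at hK
    rw [← hK] at hcop
    exact hp.one_lt.ne' (Nat.Coprime.eq_one_of_dvd hcop (Nat.minFac_dvd m))

theorem admitsProperUGF_of_admitsUCF (h : AdmitsUCF G) (hG : ¬IsCyclic G) : AdmitsProperUGF G := by
  obtain ⟨L, t, hLt, hcyc⟩ := admitsUCF_iff.1 h
  refine admitsProperUGF_iff.2 ⟨L, t, hLt, fun K hK hKtop => hG ?_⟩
  have := hcyc K hK
  subst hKtop
  exact Subgroup.topEquiv.isCyclic.1 this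

end Cyclic

theorem admitsUCF_of_forall_isSimpleGroup (n : ℕ)
    (h : ∀ (G : Type) [Group G] [Finite G], Nat.card G ≤ n → IsSimpleGroup G →
      ¬IsCyclicOfPrimePowerOrder G → AdmitsProperUGF G)
    (G : Type) [Group G] [Finite G] (hG : Nat.card G ≤ n) : AdmitsUCF G := by
  suffices ∀ (G : Type) [Finite G] [Group G], Nat.card G ≤ n → AdmitsUCF G from this G hG
  intro G _
  induction G using Finite.induction_subsingleton_or_nontrivial with
  | hbase G => exact fun _ => admitsUCF_of_isCyclic inferInstance
  | hstep G ih =>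
    intro _ hG
    have ih' (H : Type) [Group H] [Finite H] (hH : Nat.card H < Nat.card G) : AdmitsUCF H :=
      ih H hH (hH.le.trans hG)
    by_cases hcyc : IsCyclic G
    · exact admitsUCF_of_isCyclic hcyc
    by_cases hs : IsSimpleGroup G
    · obtain ⟨L, t, hLt, hL⟩ := admitsProperUGF_iff.1 (h G hG hs fun h' => hcyc h'.1)
      exact admitsUCF_of_isUniformFactorization hLt fun K hK =>
        ih' K (Subgroup.card_lt_of_ne_top (hL K hK))
    · obtain ⟨N, hN, hbot, htop⟩ : ∃ N : Subgroup G, N.Normal ∧ N ≠ ⊥ ∧ N ≠ ⊤ := by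
        by_contra! hcon
        exact hs ⟨fun N hN => or_iff_not_imp_left.2 (hcon N hN)⟩
      exact admitsUCF_of_normal N (ih' N (Subgroup.card_lt_of_ne_top htop))
        (ih' (G ⧸ N) (QuotientGroup.card_lt_of_ne_bot hbot))

theorem ucf_tfae_general (n : ℕ) :
    List.TFAE
      [∀ (G : Type) [Group G] [Finite G], Nat.card G ≤ n → AdmitsUCF G,
       ∀ (G : Type) [Group G] [Finite G], Nat.card G ≤ n →
         ¬ IsCyclicOfPrimePowerOrder G → AdmitsProperUGF G,
       ∀ (G : Type) [Group G] [Finite G], Nat.card G ≤ n → IsSimpleGroup G →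
         ¬ IsCyclicOfPrimePowerOrder G → AdmitsProperUGF G] := by
  tfae_have 1 → 2 := fun h G _ _ hG hpp => by
    by_cases hcyc : IsCyclic G
    · exact admitsProperUGF_of_isCyclic fun ⟨p, r, hp, hr⟩ => hpp ⟨hcyc, p, r, hp, hr⟩
    · exact admitsProperUGF_of_admitsUCF (h G hG) hcyc
  tfae_have 2 → 3 := fun h G _ _ hG _ => h G hG
  tfae_have 3 → 1 := admitsUCF_of_forall_isSimpleGroup n
  tfae_finish

/-- Equivalence of the three conditions on groups of order at most `n`. -/
theorem ucf_tfae (n : ℕ) (hn : 1 ≤ n) :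
    List.TFAE
      [∀ (G : Type) [Group G] [Finite G], Nat.card G ≤ n → AdmitsUCF G,
       ∀ (G : Type) [Group G] [Finite G], Nat.card G ≤ n →
         ¬ IsCyclicOfPrimePowerOrder G → AdmitsProperUGF G,
       ∀ (G : Type) [Group G] [Finite G], Nat.card G ≤ n → IsSimpleGroup G →
         ¬ IsCyclicOfPrimePowerOrder G → AdmitsProperUGF G] :=
  ucf_tfae_general n
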